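/- Let U : ℝ² → (unitary operators on H) be a group homomorphism whose values all commute with Γ, and let M be a von Neumann algebra on H with ΓMΓ = M and U(x) M U(x)* ⊆ M for every x in the right wedge W_R. For x ∈ ℝ² set M_x := U(x) M U(x)*, and for y − x ∈ W_R define F(O_{x,y}) := M_x^t ∩ M_y'. Then the net F is twisted-local in the following sense: if x, y, z, w ∈ ℝ² with y − x ∈ W_R and w − z ∈ W_R, and if either x − w ∈ W_R or z − y ∈ W_R (so that O_{z,w} lies spacelike to O_{x,y}), then every element of F(O_{z,w}) commutes with every element of F(O_{x,y})^t, i.e. F(O_{z,w}) ⊆ (F(O_{x,y})^t)'. -/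

import Mathlib

/-!
Since `Z` is unitary with `Z² = Γ`, twisting twice is conjugation by `Γ`, and twisting is
multiplicative. If `x − w ∈ W_R`, then `(M_x^t)^t = Γ M_x Γ = M_x ⊆ M_w`, whose commutant
contains `F(O_{z,w})`. If `z − y ∈ W_R`, then `M_z ⊆ M_y`, so `M_z` commutes with
`M_y' ⊇ F(O_{x,y})`; twisting both sides preserves this, and `F(O_{z,w}) ⊆ M_z^t`.
-/

open Set

section StarConj

variable {R : Type*} [Monoid R] [StarMul R]

def starConj (u : R) : R → R := fun a => u * a * star u

theorem starConj_comp_starConj (u v : R) : starConj u ∘ starConj v = starConj (u * v) := by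
  funext a
  simp only [Function.comp_apply, starConj, star_mul, mul_assoc]

theorem Commute.starConj_comp_comm {u v : R} (h : Commute u v) :
    starConj u ∘ starConj v = starConj v ∘ starConj u := by
  rw [starConj_comp_starConj, starConj_comp_starConj, h.eq]

theorem starConj_mul {u : R} (hu : star u * u = 1) (a b : R) :
    starConj u (a * b) = starConj u a * starConj u b := by
  simp only [starConj, mul_assoc]
  rw [← mul_assoc (star u), hu, one_mul]

theorem Commute.starConj {u : R} (hu : star u * u = 1) {a b : R} (h : Commute a b) :
    Commute (starConj u a) (starConj u b) := by
  rw [Commute, SemiconjBy, ← starConj_mul hu, ← starConj_mul hu, h.eq]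

theorem image_starConj_subset_centralizer_image_centralizer {u : R} (hu : star u * u = 1)
    {S T : Set R} (hST : S ⊆ T) :
    starConj u '' S ⊆ centralizer (starConj u '' centralizer T) := by
  rintro _ ⟨a, ha, rfl⟩ _ ⟨b, hb, rfl⟩
  exact (Commute.starConj hu (hb a (hST ha))).symm

theorem centralizer_subset_centralizer_image_image_starConj {u : R} {S T : Set R}
    (hST : starConj (u * u) '' S ⊆ T) :
    centralizer T ⊆ centralizer (starConj u '' (starConj u '' S)) := by
  rw [← image_comp, starConj_comp_starConj]
  exact centralizer_subset hST

theorem image_starConj_image_starConj_subset {u v : R} (huv : Commute v u) {M : Set R}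
    (hM : starConj v '' M ⊆ M) :
    starConj v '' (starConj u '' M) ⊆ starConj u '' M := by
  rw [image_image, ← Function.comp_def, huv.starConj_comp_comm, image_comp]
  exact image_mono hM

end StarConj

section TwistedNet

variable {R G : Type*} [Monoid R] [StarMul R] [AddCommGroup G]

def twistedNet (Z : R) (N : G → Set R) (a b : G) : Set R :=
  starConj Z '' N a ∩ centralizer (N b)

theorem twistedNet_subset_centralizer_image {Z : R} (hZ : star Z * Z = 1) {N : G → Set R}
    {W : Set G} (hNW : ∀ a b, b - a ∈ W → N b ⊆ N a)
    (hNΓ : ∀ a, starConj (Z * Z) '' N a ⊆ N a) {x y z w : G} (hsep : x - w ∈ W ∨ z - y ∈ W) :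
    twistedNet Z N z w ⊆ centralizer (starConj Z '' twistedNet Z N x y) := by
  rcases hsep with hxw | hzy
  · calc twistedNet Z N z w ⊆ centralizer (N w) := inter_subset_right
      _ ⊆ centralizer (starConj Z '' (starConj Z '' N x)) :=
        centralizer_subset_centralizer_image_image_starConj ((hNΓ x).trans (hNW w x hxw))
      _ ⊆ centralizer (starConj Z '' twistedNet Z N x y) :=
        centralizer_subset (image_mono inter_subset_left)
  · calc twistedNet Z N z w ⊆ starConj Z '' N z := inter_subset_left
      _ ⊆ centralizer (starConj Z '' centralizer (N y)) :=
        image_starConj_subset_centralizer_image_centralizer hZ (hNW y z hzy)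
      _ ⊆ centralizer (starConj Z '' twistedNet Z N x y) :=
        centralizer_subset (image_mono inter_subset_right)

theorem image_starConj_subset_of_sub_mem {U : G → R} (hU : ∀ a b, U (a + b) = U a * U b)
    {M : Set R} {W : Set G} (hMW : ∀ a ∈ W, starConj (U a) '' M ⊆ M) {a b : G}
    (hab : b - a ∈ W) : starConj (U b) '' M ⊆ starConj (U a) '' M := by
  have hb : U b = U a * U (b - a) := by rw [← hU, add_sub_cancel]
  rw [hb, ← starConj_comp_starConj, image_comp]
  exact image_mono (hMW _ hab)

end TwistedNet

section Twist

open Complex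

variable {A : Type*} [Ring A] [Algebra ℂ A]

noncomputable def twist (Γ : A) : A := ((1 - I) / 2) • (1 : A) + ((1 + I) / 2) • Γ

theorem twist_mul_self {Γ : A} (hΓ : Γ * Γ = 1) : twist Γ * twist Γ = Γ := by
  simp only [twist, add_mul, mul_add, smul_mul_smul_comm, one_mul, mul_one, hΓ]
  rw [show Γ = (0 : ℂ) • (1 : A) + (1 : ℂ) • Γ by simp]
  match_scalars <;> norm_num [Complex.ext_iff]

theorem star_twist_mul_self [StarRing A] [StarModule ℂ A] {Γ : A} (hΓsa : IsSelfAdjoint Γ)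
    (hΓ : Γ * Γ = 1) :
    star (twist Γ) * twist Γ = 1 := by
  simp only [twist, star_add, star_smul, star_one, hΓsa.star_eq, add_mul, mul_add,
    smul_mul_smul_comm, one_mul, mul_one, hΓ]
  rw [show (1 : A) = (1 : ℂ) • (1 : A) by simp]
  match_scalars <;> norm_num [Complex.ext_iff, Complex.star_def]

end Twist

theorem twisted_locality_of_net_general
    {H : Type*} [NormedAddCommGroup H] [InnerProductSpace ℂ H] [CompleteSpace H]
    (Γ : H →L[ℂ] H) (hΓsa : ContinuousLinearMap.adjoint Γ = Γ) (hΓ2 : Γ * Γ = 1)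
    (Z : H →L[ℂ] H)
    (hZ : Z = ((1 - Complex.I) / 2) • (1 : H →L[ℂ] H) + ((1 + Complex.I) / 2) • Γ)
    -- the unitary translation group, commuting with Γ
    (U : ℝ × ℝ → (H →L[ℂ] H))
    (hUadd : ∀ a b : ℝ × ℝ, U (a + b) = U a * U b)
    (hUΓ : ∀ a : ℝ × ℝ, U a * Γ = Γ * U a)
    -- the right wedge
    (WR : Set (ℝ × ℝ))
    -- the wedge algebra and its translates
    (M : VonNeumannAlgebra H)
    (hMΓ : ∀ B ∈ M, Γ * B * Γ ∈ M)
    (Mx : ℝ × ℝ → Set (H →L[ℂ] H))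
    (hMx : Mx = fun a =>
      (fun B => U a * B * ContinuousLinearMap.adjoint (U a)) '' (M : Set (H →L[ℂ] H)))
    (hMwedge : ∀ a ∈ WR, Mx a ⊆ (M : Set (H →L[ℂ] H)))
    -- the twisted double cone algebras
    (F : ℝ × ℝ → ℝ × ℝ → Set (H →L[ℂ] H))
    (hF : F = fun a b =>
      ((fun B => Z * B * ContinuousLinearMap.adjoint Z) '' (Mx a)) ∩ Set.centralizer (Mx b))
    -- spacelike separated double cones
    (x y z w : ℝ × ℝ)
    (hsep : x - w ∈ WR ∨ z - y ∈ WR) :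
    F z w ⊆ Set.centralizer ((fun B => Z * B * ContinuousLinearMap.adjoint Z) '' (F x y)) := by
  have hΓ : IsSelfAdjoint Γ := hΓsa
  have hΓM : starConj Γ '' (M : Set (H →L[ℂ] H)) ⊆ M := by
    rintro _ ⟨B, hB, rfl⟩
    simpa only [starConj, hΓ.star_eq, SetLike.mem_coe] using hMΓ B hB
  subst hZ hMx hF
  refine twistedNet_subset_centralizer_image (star_twist_mul_self hΓ hΓ2)
    (fun a b hab => image_starConj_subset_of_sub_mem hUadd hMwedge hab) (fun a => ?_) hsep
  rw [twist_mul_self hΓ2]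
  exact image_starConj_image_starConj_subset (hUΓ a : Commute (U a) Γ).symm hΓM

/-- Let `U : ℝ² → (unitaries on H)` be a group homomorphism whose values
commute with `Γ`, and `M` a von Neumann algebra with `ΓMΓ = M` and `U(x) M U(x)* ⊆ M` for
every `x` in the right wedge `W_R = {x : |x⁰| < x¹}`. For `x ∈ ℝ²` set `M_x := U(x) M U(x)*`,
and for `y − x ∈ W_R` define `F(O_{x,y}) := M_x^t ∩ M_y'`. Then the net `F` is twisted-local:
if `y − x ∈ W_R`, `w − z ∈ W_R`, and either `x − w ∈ W_R` or `z − y ∈ W_R`, then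
`F(O_{z,w}) ⊆ (F(O_{x,y})^t)'`. -/
theorem twisted_locality_of_net
    {H : Type*} [NormedAddCommGroup H] [InnerProductSpace ℂ H] [CompleteSpace H]
    (Γ : H →L[ℂ] H) (hΓsa : ContinuousLinearMap.adjoint Γ = Γ) (hΓ2 : Γ * Γ = 1)
    (Z : H →L[ℂ] H)
    (hZ : Z = ((1 - Complex.I) / 2) • (1 : H →L[ℂ] H) + ((1 + Complex.I) / 2) • Γ)
    -- the unitary translation group, commuting with Γ
    (U : ℝ × ℝ → (H →L[ℂ] H))
    (hU0 : U 0 = 1)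
    (hUadd : ∀ a b : ℝ × ℝ, U (a + b) = U a * U b)
    (hUunit : ∀ a : ℝ × ℝ,
      ContinuousLinearMap.adjoint (U a) * U a = 1 ∧ U a * ContinuousLinearMap.adjoint (U a) = 1)
    (hUΓ : ∀ a : ℝ × ℝ, U a * Γ = Γ * U a)
    -- the right wedge
    (WR : Set (ℝ × ℝ)) (hWR : WR = {a : ℝ × ℝ | |a.1| < a.2})
    -- the wedge algebra and its translates
    (M : VonNeumannAlgebra H)
    (hMΓ : ∀ B ∈ M, Γ * B * Γ ∈ M)
    (Mx : ℝ × ℝ → Set (H →L[ℂ] H))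
    (hMx : Mx = fun a =>
      (fun B => U a * B * ContinuousLinearMap.adjoint (U a)) '' (M : Set (H →L[ℂ] H)))
    (hMwedge : ∀ a ∈ WR, Mx a ⊆ (M : Set (H →L[ℂ] H)))
    -- the twisted double cone algebras
    (F : ℝ × ℝ → ℝ × ℝ → Set (H →L[ℂ] H))
    (hF : F = fun a b =>
      ((fun B => Z * B * ContinuousLinearMap.adjoint Z) '' (Mx a)) ∩ Set.centralizer (Mx b))
    -- spacelike separated double cones
    (x y z w : ℝ × ℝ) (hxy : y - x ∈ WR) (hzw : w - z ∈ WR)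
    (hsep : x - w ∈ WR ∨ z - y ∈ WR) :
    F z w ⊆ Set.centralizer ((fun B => Z * B * ContinuousLinearMap.adjoint Z) '' (F x y)) :=
  twisted_locality_of_net_general Γ hΓsa hΓ2 Z hZ U hUadd hUΓ WR M hMΓ Mx hMx hMwedge F hF x y z w
    hsep
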